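/- For any two non-adjacent (vertex-disjoint) edges e and f of K₃,₃, the graph obtained from K₃,₃ by subdividing e once and subdividing f once is isomorphic to Γ₈; in particular, all such graphs obtained from different choices of a pair of disjoint edges of K₃,₃ are isomorphic to one another. -/

import Mathlib

/-- The graph obtained from `G` by subdividing the edge `uw` once: the edge `uw` is
deleted, and a new vertex `x` is added together with the edges `ux` and `xw`. -/
def subdivide {V : Type} (G : SimpleGraph V) (u w : V) : SimpleGraph (V ⊕ Unit) :=
  SimpleGraph.fromEdgeSet
    ((Sym2.map Sum.inl '' (G.edgeSet \ {s(u, w)})) ∪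
      {s(Sum.inl u, Sum.inr ()), s(Sum.inr (), Sum.inl w)})

/-- `H` is a minor of `G`: `H` can be obtained from a subgraph of `G` by contracting edges.
Equivalently (branch-set formulation): there is a family of nonempty, pairwise disjoint,
connected subsets of the vertices of `G`, indexed by the vertices of `H`, such that whenever
two vertices are adjacent in `H` there is an edge of `G` between the corresponding sets. -/
def IsMinor {W V : Type} (H : SimpleGraph W) (G : SimpleGraph V) : Prop :=
  ∃ B : W → Set V,
    (∀ w, (B w).Nonempty) ∧
    (∀ w, (G.induce (B w)).Connected) ∧
    (∀ w₁ w₂, w₁ ≠ w₂ → Disjoint (B w₁) (B w₂)) ∧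
    (∀ w₁ w₂, H.Adj w₁ w₂ → ∃ u ∈ B w₁, ∃ x ∈ B w₂, G.Adj u x)

/-- The complete bipartite graph `K₃,₃`. -/
def K33 : SimpleGraph (Fin 3 ⊕ Fin 3) := completeBipartiteGraph (Fin 3) (Fin 3)

/-- The vertices of the graph `Γ₈`. -/
inductive V8 : Type
  | v1 | v2 | a1 | a2 | a3 | b1 | b2 | b3
  deriving DecidableEq

open V8

/-- The graph `Γ₈`: the hexagonal cycle `a₁a₂a₃b₁b₂b₃a₁`, the chord `a₃b₃`,
and the four edges `a₁v₁`, `v₁b₁`, `a₂v₂`, `v₂b₂`. -/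
def Gamma8 : SimpleGraph V8 :=
  SimpleGraph.fromEdgeSet
    {s(a1, a2), s(a2, a3), s(a3, b1), s(b1, b2), s(b2, b3), s(b3, a1),
     s(a3, b3),
     s(a1, v1), s(v1, b1), s(a2, v2), s(v2, b2)}

/-!
Relabelling the two sides of `K₃,₃` by permutations gives automorphisms, and these act
transitively on ordered pairs of disjoint edges (each edge is determined by one vertex on each
side, and `S₃` acts 2-transitively on each side). Subdivision is functorial for graph
isomorphisms, so every such double subdivision is isomorphic to the one at the edges
`(0, 0)` and `(1, 1)`, and that one is identified with `Γ₈` by an explicit labelling checked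
by computation.
-/

open SimpleGraph

section Subdivide

variable {V V' : Type} (G : SimpleGraph V) (u w : V)

lemma subdivide_comm : subdivide G u w = subdivide G w u := by
  unfold subdivide
  rw [Sym2.eq_swap (a := u), Sym2.eq_swap (a := Sum.inl u),
    Sym2.eq_swap (a := Sum.inr ()) (b := Sum.inl w), Set.pair_comm]

lemma subdivide_congr {u' w' : V} (h : s(u, w) = s(u', w')) :
    subdivide G u w = subdivide G u' w' := by
  rcases Sym2.eq_iff.mp h with ⟨rfl, rfl⟩ | ⟨rfl, rfl⟩
  · rfl
  · exact subdivide_comm G u w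

@[simp]
lemma subdivide_adj_inl_inl (a b : V) :
    (subdivide G u w).Adj (.inl a) (.inl b) ↔ G.Adj a b ∧ s(a, b) ≠ s(u, w) := by
  have hinj : Function.Injective (Sym2.map (Sum.inl : V → V ⊕ Unit)) :=
    Sym2.map.injective Sum.inl_injective
  simp only [subdivide, fromEdgeSet_adj, Set.mem_union, Set.mem_image, Set.mem_sdiff,
    Set.mem_singleton_iff, Set.mem_insert_iff, ne_eq, Sum.inl.injEq]
  constructor
  · rintro ⟨⟨e, ⟨he, hne⟩, hmap⟩ | h | h, -⟩
    · obtain rfl : e = s(a, b) := hinj (by simpa using hmap)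
      exact ⟨he, hne⟩
    all_goals simp at h
  · rintro ⟨hab, hne⟩
    exact ⟨.inl ⟨s(a, b), ⟨hab, hne⟩, rfl⟩, by simpa using hab.ne⟩

@[simp]
lemma subdivide_adj_inl_inr (a : V) (x : Unit) :
    (subdivide G u w).Adj (.inl a) (.inr x) ↔ a = u ∨ a = w := by
  simp only [subdivide, fromEdgeSet_adj, Set.mem_union, Set.mem_image, Set.mem_insert_iff,
    Set.mem_singleton_iff, Sym2.eq_iff]
  constructor
  · rintro ⟨⟨⟨c, d⟩, -, hmap⟩ | h | h, -⟩
    · simp at hmap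
    all_goals simp_all
  · rintro (rfl | rfl) <;> simp

@[simp]
lemma subdivide_adj_inr_inl (x : Unit) (b : V) :
    (subdivide G u w).Adj (.inr x) (.inl b) ↔ b = u ∨ b = w := by
  rw [adj_comm, subdivide_adj_inl_inr]

@[simp]
lemma subdivide_not_adj_inr_inr (x y : Unit) : ¬ (subdivide G u w).Adj (.inr x) (.inr y) := by
  simp [subdivide]

instance [DecidableEq V] [DecidableRel G.Adj] : DecidableRel (subdivide G u w).Adj
  | .inl a, .inl b => decidable_of_iff' _ (subdivide_adj_inl_inl G u w a b)
  | .inl a, .inr x => decidable_of_iff' _ (subdivide_adj_inl_inr G u w a x)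
  | .inr x, .inl b => decidable_of_iff' _ (subdivide_adj_inr_inl G u w x b)
  | .inr x, .inr y => isFalse (subdivide_not_adj_inr_inr G u w x y)

variable {G u w} {G' : SimpleGraph V'} {u' w' : V'}

def SimpleGraph.Iso.subdivide (e : G ≃g G') (hu : e u = u') (hw : e w = w') :
    _root_.subdivide G u w ≃g _root_.subdivide G' u' w' where
  toEquiv := e.toEquiv.sumCongr (Equiv.refl Unit)
  map_rel_iff' := by
    subst hu hw
    rintro (a | x) (b | y) <;> simp [e.map_adj_iff]

end Subdivide

lemma Equiv.Perm.exists_apply_eq_and_apply_eq {α : Type*} [DecidableEq α] {a c x y : α}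
    (hac : a ≠ c) (hxy : x ≠ y) : ∃ σ : Equiv.Perm α, σ a = x ∧ σ c = y := by
  set τ := Equiv.swap a x
  have hτc : τ c ≠ x := fun h => hac (τ.injective ((Equiv.swap_apply_left a x).trans h.symm))
  refine ⟨τ.trans (Equiv.swap (τ c) y), ?_, by simp⟩
  simp [τ, Equiv.swap_apply_of_ne_of_ne hτc.symm hxy]

instance : DecidableRel K33.Adj := fun x y =>
  inferInstanceAs (Decidable (x.isLeft ∧ y.isRight ∨ x.isRight ∧ y.isLeft))

lemma K33.exists_eq_of_adj {u w : Fin 3 ⊕ Fin 3} (h : K33.Adj u w) :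
    ∃ a b, s(u, w) = s(.inl a, .inr b) := by
  rcases u with a | a <;> rcases w with b | b <;> simp [K33] at h
  exacts [⟨a, b, rfl⟩, ⟨b, a, Sym2.eq_swap⟩]

instance : Fintype V8 :=
  ⟨{v1, v2, a1, a2, a3, b1, b2, b3}, fun x => by cases x <;> decide⟩

instance : DecidableRel Gamma8.Adj := by
  dsimp only [Gamma8]
  infer_instance

/-- The seven edges of `K₃,₃` other than the two subdivided ones become the hexagon of `Γ₈`
and its chord. -/
def labelGamma8 : ((Fin 3 ⊕ Fin 3) ⊕ Unit) ⊕ Unit → V8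
  | .inl (.inl (.inl 0)) => a1
  | .inl (.inl (.inl 1)) => b2
  | .inl (.inl (.inl 2)) => a3
  | .inl (.inl (.inr 0)) => b1
  | .inl (.inl (.inr 1)) => a2
  | .inl (.inl (.inr 2)) => b3
  | .inl (.inr ()) => v1
  | .inr () => v2

noncomputable def K33.subdivideSubdivideIsoGamma8 :
    subdivide (subdivide K33 (.inl 0) (.inr 0)) (.inl (.inl 1)) (.inl (.inr 1)) ≃g Gamma8 where
  toEquiv := Equiv.ofBijective labelGamma8 (by decide)
  map_rel_iff' := by decide

lemma K33.nonempty_subdivide_subdivide_iso_Gamma8 {a b c d : Fin 3} (hac : a ≠ c)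
    (hbd : b ≠ d) :
    Nonempty (subdivide (subdivide K33 (.inl a) (.inr b)) (.inl (.inl c)) (.inl (.inr d))
      ≃g Gamma8) := by
  obtain ⟨σ, hσa, hσc⟩ := Equiv.Perm.exists_apply_eq_and_apply_eq hac zero_ne_one
  obtain ⟨τ, hτb, hτd⟩ := Equiv.Perm.exists_apply_eq_and_apply_eq hbd zero_ne_one
  let e : K33 ≃g K33 := completeBipartiteGraphCongr σ τ
  have ha : e (.inl a) = .inl 0 := congrArg Sum.inl hσa
  have hb : e (.inr b) = .inr 0 := congrArg Sum.inr hτb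
  let e₁ := e.subdivide ha hb
  have hc : e₁ (.inl (.inl c)) = .inl (.inl 1) := congrArg (Sum.inl ∘ Sum.inl) hσc
  have hd : e₁ (.inl (.inr d)) = .inl (.inr 1) := congrArg (Sum.inl ∘ Sum.inr) hτd
  exact ⟨(e₁.subdivide hc hd).trans K33.subdivideSubdivideIsoGamma8⟩

/-- For any two non-adjacent (vertex-disjoint) edges `e = uw` and `f = u'w'` of `K₃,₃`, the
graph obtained from `K₃,₃` by subdividing `e` once and subdividing `f` once is isomorphic
to `Γ₈`; in particular, all such graphs obtained from different choices of a pair of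
disjoint edges of `K₃,₃` are isomorphic to one another. -/
theorem double_subdivision_of_K33_is_Gamma8 (u w u' w' : Fin 3 ⊕ Fin 3)
    (he : K33.Adj u w) (hf : K33.Adj u' w')
    (h1 : u ≠ u') (h2 : u ≠ w') (h3 : w ≠ u') (h4 : w ≠ w') :
    Nonempty ((subdivide (subdivide K33 u w) (Sum.inl u') (Sum.inl w')) ≃g Gamma8) := by
  obtain ⟨a, b, hab⟩ := K33.exists_eq_of_adj he
  obtain ⟨c, d, hcd⟩ := K33.exists_eq_of_adj hf
  have hdisj : ∀ x ∈ s(u, w), ∀ y ∈ s(u', w'), x ≠ y := by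
    simp only [Sym2.mem_iff]
    rintro x (rfl | rfl) y (rfl | rfl) <;> assumption
  rw [hab, hcd] at hdisj
  have hac : a ≠ c := fun h =>
    hdisj _ (Sym2.mem_mk_left _ _) _ (Sym2.mem_mk_left _ _) (congrArg _ h)
  have hbd : b ≠ d := fun h =>
    hdisj _ (Sym2.mem_mk_right _ _) _ (Sym2.mem_mk_right _ _) (congrArg _ h)
  have hcd' :
      s((.inl u' : (Fin 3 ⊕ Fin 3) ⊕ Unit), .inl w') = s(.inl (.inl c), .inl (.inr d)) :=
    congrArg (Sym2.map Sum.inl) hcd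
  rw [subdivide_congr K33 u w hab, subdivide_congr _ _ _ hcd']
  exact K33.nonempty_subdivide_subdivide_iso_Gamma8 hac hbd
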